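/- Let G be a graph and construct G' as follows: for every vertex v of G add a new pendant vertex v' adjacent only to v, and replace every edge vw of G by two internally disjoint paths of length 2 from v to w (using two new vertices per edge). Then for every k, G has a vertex cover of size at most k if and only if G' has a set S of at most k vertices such that G' − S has linear rankwidth at most 1. -/

import Mathlib

open scoped Classical

namespace LRW1

/-- The GF(2)-rank of the adjacency submatrix between `S` and its complement. -/
noncomputable def cutRank {V : Type} [Fintype V] (G : SimpleGraph V) (S : Set V) : ℕ :=
  Matrix.rank (Matrix.of fun (i : ↥S) (j : ↥(Sᶜ)) => if G.Adj i.1 j.1 then (1 : ZMod 2) else 0)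

/-- `G` has linear rankwidth at most `k`: some linear ordering of the vertices in which
every prefix has cut-rank at most `k`. -/
def LinRankwidthLE {V : Type} [Fintype V] (G : SimpleGraph V) (k : ℕ) : Prop :=
  ∃ σ : V ≃ Fin (Fintype.card V), ∀ i : ℕ, cutRank G {v : V | (σ v : ℕ) < i} ≤ k

/-- `B` is (the vertex set of) a thread block of `G` with first vertex `x` and last vertex `y`:
there is an ordering `σ` of `B` and a labeling (encoded by the predicates `lL`, `lR`,
"L ∈ ℓ(v)" and "R ∈ ℓ(v)") such that the first vertex is labelled `{R}`, the last `{L}`,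
and for `v <_σ w`, `vw` is an edge iff `R ∈ ℓ(v)` and `L ∈ ℓ(w)`. -/
def IsThreadBlock {V : Type} (G : SimpleGraph V) (B : Finset V) (x y : V) : Prop :=
  2 ≤ B.card ∧ x ∈ B ∧ y ∈ B ∧
  ∃ (σ : ↥B ≃ Fin B.card) (lL lR : V → Prop),
    (∀ v : ↥B, lL v.1 ∨ lR v.1) ∧
    (∀ hx : x ∈ B, (σ ⟨x, hx⟩ : ℕ) = 0) ∧ lR x ∧ ¬ lL x ∧
    (∀ hy : y ∈ B, (σ ⟨y, hy⟩ : ℕ) = B.card - 1) ∧ lL y ∧ ¬ lR y ∧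
    (∀ v w : ↥B, (σ v : ℕ) < (σ w : ℕ) → (G.Adj v.1 w.1 ↔ (lR v.1 ∧ lL w.1)))

/-- `G = P ⊙ 𝓑` for the directed path `P = v 0, v 1, …, v n` with `n` thread blocks `B i`
(for the arc from `v i` to `v (i+1)`), forming a mergeable family whose union is `G`. -/
def IsThreadDecomp {V : Type} (G : SimpleGraph V) (n : ℕ)
    (v : Fin (n+1) → V) (B : Fin n → Finset V) : Prop :=
  Function.Injective v ∧
  (∀ i : Fin n, IsThreadBlock G (B i) (v i.castSucc) (v i.succ)) ∧
  (∀ i j : Fin n, i ≠ j →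
    ((B i : Set V) ∩ (B j : Set V)) =
      (({v i.castSucc, v i.succ} : Set V) ∩ ({v j.castSucc, v j.succ} : Set V))) ∧
  (∀ a : V, ∃ i : Fin n, a ∈ B i) ∧
  (∀ a b : V, G.Adj a b → ∃ i : Fin n, a ∈ B i ∧ b ∈ B i)

/-- A (connected) thread graph: a single vertex, or `P ⊙ 𝓑` for a directed path `P`. -/
def IsThreadGraph {V : Type} [Fintype V] (G : SimpleGraph V) : Prop :=
  G.Connected ∧ (Fintype.card V ≤ 1 ∨
    ∃ (n : ℕ) (v : Fin (n+1) → V) (B : Fin n → Finset V), 1 ≤ n ∧ IsThreadDecomp G n v B)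

/-- Cyclic successor on `Fin h`. -/
def cycSucc {h : ℕ} (i : Fin h) : Fin h := ⟨(i.1 + 1) % h, Nat.mod_lt _ i.pos⟩

/-- `G = C ⊙ 𝓑` for the directed cycle `C` on `v 0, …, v (h-1)` with thread blocks `B i`
for the arcs `v i → v (i+1 mod h)`, forming a mergeable family whose union is `G`. -/
def IsNecklaceDecomp {V : Type} (G : SimpleGraph V) (h : ℕ)
    (v : Fin h → V) (B : Fin h → Finset V) : Prop :=
  3 ≤ h ∧ Function.Injective v ∧
  (∀ i : Fin h, IsThreadBlock G (B i) (v i) (v (cycSucc i))) ∧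
  (∀ i j : Fin h, i ≠ j →
    ((B i : Set V) ∩ (B j : Set V)) =
      (({v i, v (cycSucc i)} : Set V) ∩ ({v j, v (cycSucc j)} : Set V))) ∧
  (∀ a : V, ∃ i : Fin h, a ∈ B i) ∧
  (∀ a b : V, G.Adj a b → ∃ i : Fin h, a ∈ B i ∧ b ∈ B i)

/-- The graph `G'` built from `G`: each original vertex `Sum.inl v` gets a private pendant
vertex `Sum.inr (Sum.inl v)`, and each edge `e` of `G` is replaced by two internally
disjoint paths of length 2 through the new vertices `Sum.inr (Sum.inr (e, c))`, `c : Bool`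
(original edges are not retained). -/
def vcGadget {V : Type} (G : SimpleGraph V) :
    SimpleGraph (V ⊕ (V ⊕ (G.edgeSet × Bool))) :=
  SimpleGraph.fromRel (fun a b =>
    (∃ v : V, a = Sum.inl v ∧ b = Sum.inr (Sum.inl v)) ∨
    (∃ (v : V) (e : G.edgeSet) (c : Bool),
      a = Sum.inl v ∧ b = Sum.inr (Sum.inr (e, c)) ∧ v ∈ (e : Sym2 V)))


open Matrix

section RankHelpers

lemma rank_le_one_of_row {K : Type} [Field K] {m n : Type} [Fintype m] [Fintype n]
    (M : Matrix m n K) (i₀ : m) (h : ∀ i j, i ≠ i₀ → M i j = 0) : M.rank ≤ 1 := by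
  have hr : LinearMap.range M.mulVecLin ≤ Submodule.span K {(Pi.single i₀ 1 : m → K)} := by
    rintro y ⟨x, rfl⟩
    have hy : M.mulVec x = (M i₀ ⬝ᵥ x) • (Pi.single i₀ 1 : m → K) := by
      funext i
      by_cases hi : i = i₀
      · subst hi; simp [Matrix.mulVec]
      · simp only [Pi.smul_apply, Pi.single_apply, if_neg hi, smul_zero]
        simp only [Matrix.mulVec, dotProduct]
        exact Finset.sum_eq_zero fun j _ => by simp [h i j hi]
    rw [Matrix.mulVecLin_apply, hy]
    exact Submodule.smul_mem _ _ (Submodule.mem_span_singleton_self _)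
  have hps : (Pi.single i₀ 1 : m → K) ≠ 0 := by
    intro h0
    have := congrFun h0 i₀
    simp at this
  calc M.rank ≤ Module.finrank K (Submodule.span K {(Pi.single i₀ 1 : m → K)}) :=
        Submodule.finrank_mono hr
    _ = 1 := finrank_span_singleton hps

lemma rank_le_one_of_col {K : Type} [Field K] {m n : Type} [Fintype m] [Fintype n]
    (M : Matrix m n K) (j₀ : n) (h : ∀ i j, j ≠ j₀ → M i j = 0) : M.rank ≤ 1 := by
  rw [← Matrix.rank_transpose]
  exact rank_le_one_of_row Mᵀ j₀ (fun i j hij => h j i hij)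

lemma rank_submatrix_row_le {K : Type} [Field K] {m n m' : Type} [Fintype m] [Fintype n]
    [Fintype m'] (M : Matrix m n K) (f : m' → m) :
    (M.submatrix f id).rank ≤ M.rank := by
  have hlin : (M.submatrix f id).mulVecLin = (LinearMap.funLeft K K f).comp M.mulVecLin := by
    ext x i
    simp [Matrix.mulVecLin_apply, Matrix.mulVec, Matrix.submatrix, dotProduct,
      Pi.single_apply, mul_ite, mul_one, mul_zero, Finset.sum_ite_eq']
  rw [Matrix.rank, hlin, LinearMap.range_comp]
  exact Submodule.finrank_map_le _ _

lemma rank_submatrix_le' {K : Type} [Field K] {m n m' n' : Type} [Fintype m] [Fintype n]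
    [Fintype m'] [Fintype n'] (M : Matrix m n K) (f : m' → m) (g : n' → n) :
    (M.submatrix f g).rank ≤ M.rank := by
  have h1 : M.submatrix f g = (M.submatrix id g).submatrix f id := rfl
  rw [h1]
  refine (rank_submatrix_row_le _ f).trans ?_
  rw [← Matrix.rank_transpose (M.submatrix (id : m → m) g)]
  have h2 : (M.submatrix (id : m → m) g)ᵀ = Mᵀ.submatrix g id := rfl
  rw [h2]
  exact (rank_submatrix_row_le _ g).trans (le_of_eq (Matrix.rank_transpose M))

end RankHelpers

lemma two_le_cutRank {V : Type} [Fintype V] (G : SimpleGraph V) (P : Set V)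
    {a b c d : V} (ha : a ∈ P) (hb : b ∈ P) (hc : c ∉ P) (hd : d ∉ P)
    (hx : ((G.Adj a c ∧ G.Adj b d) ∧ ¬(G.Adj a d ∧ G.Adj b c)) ∨
          (¬(G.Adj a c ∧ G.Adj b d) ∧ (G.Adj a d ∧ G.Adj b c))) :
    2 ≤ cutRank G P := by
  classical
  set M : Matrix ↥P ↥(Pᶜ) (ZMod 2) :=
    Matrix.of fun i j => if G.Adj i.1 j.1 then (1 : ZMod 2) else 0 with hM
  have hc' : c ∈ Pᶜ := hc
  have hd' : d ∈ Pᶜ := hd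
  set f : Fin 2 → ↥P := ![⟨a, ha⟩, ⟨b, hb⟩] with hf
  set g : Fin 2 → ↥(Pᶜ) := ![⟨c, hc'⟩, ⟨d, hd'⟩] with hg
  have hdet : (M.submatrix f g).det = 1 := by
    rw [Matrix.det_fin_two]
    have e00 : M.submatrix f g 0 0 = if G.Adj a c then (1:ZMod 2) else 0 := rfl
    have e01 : M.submatrix f g 0 1 = if G.Adj a d then (1:ZMod 2) else 0 := rfl
    have e10 : M.submatrix f g 1 0 = if G.Adj b c then (1:ZMod 2) else 0 := rfl
    have e11 : M.submatrix f g 1 1 = if G.Adj b d then (1:ZMod 2) else 0 := rfl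
    rw [e00, e01, e10, e11]
    rcases hx with ⟨⟨h1, h2⟩, h3⟩ | ⟨h3, h1, h2⟩
    · rw [if_pos h1, if_pos h2]
      rcases not_and_or.mp h3 with h | h
      · rw [if_neg h]; ring
      · rw [if_neg h]; ring
    · rcases not_and_or.mp h3 with h | h
      · rw [if_neg h, if_pos h1, if_pos h2]; ring_nf; decide
      · rw [if_neg h, if_pos h1, if_pos h2]; ring_nf; decide
  have hunit : IsUnit (M.submatrix f g) := by
    rw [Matrix.isUnit_iff_isUnit_det, hdet]; exact isUnit_one
  have h2 : (M.submatrix f g).rank = 2 := by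
    rw [Matrix.rank_of_isUnit _ hunit, Fintype.card_fin]
  calc (2:ℕ) = (M.submatrix f g).rank := h2.symm
    _ ≤ M.rank := rank_submatrix_le' M f g
    _ = cutRank G P := rfl

lemma cutRank_comap {A W : Type} [Fintype A] [Fintype W] (H : SimpleGraph A)
    (H' : SimpleGraph W) (f : A → W) (hadj : ∀ x y, H.Adj x y ↔ H'.Adj (f x) (f y))
    (P : Set W) : cutRank H (f ⁻¹' P) ≤ cutRank H' P := by
  classical
  set M' : Matrix ↥P ↥(Pᶜ) (ZMod 2) :=
    Matrix.of fun i j => if H'.Adj i.1 j.1 then (1 : ZMod 2) else 0 with hM'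
  have key : (Matrix.of fun (i : ↥(f ⁻¹' P)) (j : ↥((f ⁻¹' P)ᶜ)) =>
      if H.Adj i.1 j.1 then (1 : ZMod 2) else 0) =
      M'.submatrix (fun i : ↥(f ⁻¹' P) => (⟨f i.1, i.2⟩ : ↥P))
        (fun j : ↥((f ⁻¹' P)ᶜ) => (⟨f j.1, j.2⟩ : ↥(Pᶜ))) := by
    funext i j
    simp only [Matrix.of_apply, Matrix.submatrix_apply, hM']
    exact if_congr (hadj i.1 j.1) rfl rfl
  rw [cutRank, key]
  exact rank_submatrix_le' _ _ _

lemma lrw_comap {A W : Type} [Fintype A] [Fintype W] (H : SimpleGraph A)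
    (H' : SimpleGraph W) (f : A → W) (hf : Function.Injective f)
    (hadj : ∀ x y, H.Adj x y ↔ H'.Adj (f x) (f y)) (k : ℕ)
    (h : LinRankwidthLE H' k) : LinRankwidthLE H k := by
  classical
  obtain ⟨σ, hσ⟩ := h
  set key : A → Fin (Fintype.card W) := fun x => σ (f x) with hkey
  have hkinj : Function.Injective key := fun x y h => hf (σ.injective h)
  letI L : LinearOrder A := LinearOrder.lift' key hkinj
  have hle : ∀ x y : A, x ≤ y ↔ key x ≤ key y := fun _ _ => Iff.rfl
  let τ : Fin (Fintype.card A) ≃o A := monoEquivOfFin A rfl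
  refine ⟨τ.symm.toEquiv, fun i => ?_⟩
  have hpre : ∃ j : ℕ, {x : A | (τ.symm.toEquiv x : ℕ) < i} = f ⁻¹' {w : W | (σ w : ℕ) < j} := by
    by_cases h0 : i = 0
    · exact ⟨0, by simp [h0]⟩
    by_cases hbig : Fintype.card A ≤ 0
    · refine ⟨0, ?_⟩
      have : IsEmpty A := Fintype.card_eq_zero_iff.mp (Nat.le_zero.mp hbig)
      ext x; exact (this.false x).elim
    push_neg at hbig
    set i' := min i (Fintype.card A) with hi'
    have hi'pos : 0 < i' := lt_min (Nat.pos_of_ne_zero h0) hbig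
    have hi'lt : i' - 1 < Fintype.card A := by omega
    set xstar := τ ⟨i' - 1, hi'lt⟩ with hxstar
    refine ⟨(σ (f xstar) : ℕ) + 1, ?_⟩
    ext x
    simp only [Set.mem_setOf_eq, Set.mem_preimage, Equiv.coe_fn_mk]
    have hsame : (τ.symm.toEquiv x : Fin (Fintype.card A)) = τ.symm x := rfl
    rw [hsame]
    have h1 : ((τ.symm x : Fin (Fintype.card A)) : ℕ) < i ↔
        ((τ.symm x : Fin _) : ℕ) ≤ i' - 1 := by
      constructor
      · intro h
        have := (τ.symm x).isLt
        omega
      · intro h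
        have : ((τ.symm x : Fin _) : ℕ) < i' := by omega
        omega
    rw [h1]
    have h2 : ((τ.symm x : Fin _) : ℕ) ≤ i' - 1 ↔ x ≤ xstar := by
      rw [hxstar]
      constructor
      · intro h
        have : τ.symm x ≤ ⟨i' - 1, hi'lt⟩ := h
        have := τ.monotone this
        simpa using this
      · intro h
        have : τ.symm x ≤ τ.symm (τ ⟨i' - 1, hi'lt⟩) := τ.symm.monotone h
        exact (by simpa using this : τ.symm x ≤ ⟨i' - 1, hi'lt⟩)
    rw [h2, hle]
    constructor
    · intro h
      exact Nat.lt_succ_of_le h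
    · intro h
      exact Nat.lt_succ_iff.mp h
  obtain ⟨j, hj⟩ := hpre
  rw [hj]
  exact (cutRank_comap H H' f hadj _).trans (hσ j)


lemma cutRank_le_one_of_pivot {V : Type} [Fintype V] (G : SimpleGraph V) (P : Set V) (z : V)
    (h : ∀ a b : V, a ∈ P → b ∉ P → G.Adj a b → (a = z ∨ b = z)) : cutRank G P ≤ 1 := by
  classical
  by_cases hzP : z ∈ P
  · apply rank_le_one_of_row
      (Matrix.of fun (i : ↥P) (j : ↥(Pᶜ)) => if G.Adj i.1 j.1 then (1 : ZMod 2) else 0) ⟨z, hzP⟩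
    intro p q hne
    simp only [Matrix.of_apply, ite_eq_right_iff]
    intro hadj
    exfalso
    rcases h p.1 q.1 p.2 q.2 hadj with h1 | h1
    · exact hne (Subtype.ext h1)
    · exact q.2 (h1 ▸ hzP)
  · have hzPc : z ∈ Pᶜ := hzP
    apply rank_le_one_of_col
      (Matrix.of fun (i : ↥P) (j : ↥(Pᶜ)) => if G.Adj i.1 j.1 then (1 : ZMod 2) else 0) ⟨z, hzPc⟩
    intro p q hne
    simp only [Matrix.of_apply, ite_eq_right_iff]
    intro hadj
    exfalso
    rcases h p.1 q.1 p.2 q.2 hadj with h1 | h1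
    · exact hzP (h1 ▸ p.2)
    · exact hne (Subtype.ext h1)

lemma cutRank_le_one_of_noedge {V : Type} [Fintype V] (G : SimpleGraph V) (P : Set V)
    (h : ∀ a b : V, a ∈ P → b ∉ P → ¬ G.Adj a b) : cutRank G P ≤ 1 := by
  classical
  have h0 : (Matrix.of fun (i : ↥P) (j : ↥(Pᶜ)) => if G.Adj i.1 j.1 then (1 : ZMod 2) else 0)
      = 0 := by
    funext p q
    simp only [Matrix.of_apply, Matrix.zero_apply, ite_eq_right_iff]
    intro hadj
    exact absurd hadj (h p.1 q.1 p.2 q.2)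
  show Matrix.rank _ ≤ 1
  rw [h0, Matrix.rank_zero]
  omega

lemma lrw_le_one_of_star {W : Type} [Fintype W] (H : SimpleGraph W) (c : W → W)
    (hc : ∀ a b, H.Adj a b → c a = c b ∧ (c a = a ∨ c a = b)) :
    LinRankwidthLE H 1 := by
  classical
  set N := Fintype.card W with hN
  let e₀ : W ≃ Fin N := Fintype.equivFin W
  set key : W → Lex (Fin N × Fin N) := fun x => toLex (e₀ (c x), e₀ x) with hkey
  have hkinj : Function.Injective key := by
    intro x y h
    have := congrArg (fun p => (ofLex p).2) h
    exact e₀.injective this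
  letI L : LinearOrder W := LinearOrder.lift' key hkinj
  have hlt : ∀ x y : W, x < y ↔ key x < key y := by
    intro x y
    rw [lt_iff_le_not_ge, lt_iff_le_not_ge]
    exact Iff.rfl
  let τ : Fin (Fintype.card W) ≃o W := monoEquivOfFin W rfl
  refine ⟨τ.symm.toEquiv, fun i => ?_⟩
  set P : Set W := {v : W | ((τ.symm.toEquiv v : Fin _) : ℕ) < i} with hP
  have horder : ∀ x y : W, x ∈ P → y ∉ P → x < y := by
    intro x y hx hy
    simp only [hP, Set.mem_setOf_eq] at hx hy
    push_neg at hy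
    have hxy : (τ.symm x : Fin _) < τ.symm y := by
      have h1 : ((τ.symm.toEquiv x : Fin _) : ℕ) = ((τ.symm x : Fin _) : ℕ) := rfl
      have h2 : ((τ.symm.toEquiv y : Fin _) : ℕ) = ((τ.symm y : Fin _) : ℕ) := rfl
      have : ((τ.symm x : Fin _) : ℕ) < ((τ.symm y : Fin _) : ℕ) := by omega
      exact this
    have := (OrderIso.lt_iff_lt τ).mpr hxy
    simpa using this
  by_cases hcr : ∃ x y : W, x ∈ P ∧ y ∉ P ∧ H.Adj x y
  · obtain ⟨x₀, y₀, hx₀, hy₀, hadj₀⟩ := hcr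
    apply cutRank_le_one_of_pivot H P (c x₀)
    intro x y hx hy hadj
    obtain ⟨hcxy, hcin⟩ := hc x y hadj
    obtain ⟨hcxy₀, hcin₀⟩ := hc x₀ y₀ hadj₀
    have hcz : c x = c x₀ := by
      by_contra hne
      have hne' : e₀ (c x) ≠ e₀ (c x₀) := fun h => hne (e₀.injective h)
      rcases lt_or_gt_of_ne hne' with hlt1 | hgt1
      · have : y < x₀ := by
          rw [hlt]
          apply Prod.Lex.left
          rw [← hcxy]
          exact hlt1
        exact absurd (horder x₀ y hx₀ hy) (lt_asymm this)
      · have : y₀ < x := by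
          rw [hlt]
          apply Prod.Lex.left
          rw [← hcxy₀]
          exact hgt1
        exact absurd (horder x y₀ hx hy₀) (lt_asymm this)
    rcases hcin with h | h
    · left; rw [← h]; exact hcz
    · right; rw [← h]; exact hcz
  · apply cutRank_le_one_of_noedge H P
    intro a b hax hbx hadj
    exact hcr ⟨a, b, hax, hbx, hadj⟩


/-- vertices: 0 = v, 1 = w, 2 = pendant of v, 3 = pendant of w, 4, 5 = middles. -/
def H6 : SimpleGraph (Fin 6) where
  Adj a b := ((a = 0 ∧ b = 2) ∨ (b = 0 ∧ a = 2)) ∨ ((a = 1 ∧ b = 3) ∨ (b = 1 ∧ a = 3)) ∨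
    ((a = 0 ∨ a = 1) ∧ (b = 4 ∨ b = 5)) ∨ ((b = 0 ∨ b = 1) ∧ (a = 4 ∨ a = 5))
  symm := by
    constructor
    intro a b h
    revert h
    revert a b
    decide
  loopless := by
    constructor
    intro a
    revert a
    decide

instance : DecidableRel H6.Adj := fun a b => by unfold H6; simp only; infer_instance

lemma h6key : ∀ S : Finset (Fin 6), S.card = 3 → ∃ a ∈ S, ∃ b ∈ S, ∃ c ∈ Sᶜ, ∃ d ∈ Sᶜ,
    ((H6.Adj a c ∧ H6.Adj b d) ∧ ¬(H6.Adj a d ∧ H6.Adj b c)) ∨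
    (¬(H6.Adj a c ∧ H6.Adj b d) ∧ (H6.Adj a d ∧ H6.Adj b c)) := by decide

lemma not_lrw_H6 : ¬ LinRankwidthLE H6 1 := by
  rintro ⟨σ, hσ⟩
  set T : Finset (Fin 6) := Finset.univ.filter (fun v => (σ v : ℕ) < 3) with hT
  have hcard : T.card = 3 := by
    have hbij : T.card = (Finset.range 3).card := by
      apply Finset.card_bij (fun v _ => ((σ v : Fin _) : ℕ))
      · intro v hv
        simp only [hT, Finset.mem_filter] at hv
        simpa using hv.2
      · intro v hv w hw h
        exact σ.injective (Fin.val_injective h)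
      · intro j hj
        have hj3 : j < 3 := Finset.mem_range.mp hj
        have hjc : j < Fintype.card (Fin 6) := by simp; omega
        refine ⟨σ.symm ⟨j, hjc⟩, ?_, by simp⟩
        simp [hT]
        omega
    rw [hbij, Finset.card_range]
  obtain ⟨a, ha, b, hb, c, hc, d, hd, hx⟩ := h6key T hcard
  have h2 := two_le_cutRank H6 {v : Fin 6 | (σ v : ℕ) < 3}
    (by simpa [hT] using ha) (by simpa [hT] using hb)
    (by simpa [hT] using hc) (by simpa [hT] using hd) hx
  have := hσ 3
  omega


section Gadget
variable {V : Type} {G : SimpleGraph V}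

lemma gadget_adj_inl_inl (v w : V) : ¬ (vcGadget G).Adj (Sum.inl v) (Sum.inl w) := by
  simp [vcGadget, SimpleGraph.fromRel_adj]

lemma gadget_adj_inl_pend (v w : V) :
    (vcGadget G).Adj (Sum.inl v) (Sum.inr (Sum.inl w)) ↔ v = w := by
  simp only [vcGadget, SimpleGraph.fromRel_adj]
  constructor
  · rintro ⟨hne, (⟨u, h1, h2⟩ | ⟨u, e, c, h1, h2, _⟩) | (⟨u, h1, h2⟩ | ⟨u, e, c, h1, h2, _⟩)⟩ <;>
      simp_all
  · rintro rfl
    exact ⟨by simp, Or.inl (Or.inl ⟨v, rfl, rfl⟩)⟩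

lemma gadget_adj_inl_mid (v : V) (e : G.edgeSet) (c : Bool) :
    (vcGadget G).Adj (Sum.inl v) (Sum.inr (Sum.inr (e, c))) ↔ v ∈ (e : Sym2 V) := by
  simp only [vcGadget, SimpleGraph.fromRel_adj]
  constructor
  · rintro ⟨hne, (⟨u, h1, h2⟩ | ⟨u, e', c', h1, h2, h3⟩) | (⟨u, h1, h2⟩ | ⟨u, e', c', h1, h2, h3⟩)⟩ <;>
      simp_all
  · intro hv
    exact ⟨by simp, Or.inl (Or.inr ⟨v, e, c, rfl, rfl, hv⟩)⟩

lemma gadget_adj_pend_pend (v w : V) :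
    ¬ (vcGadget G).Adj (Sum.inr (Sum.inl v)) (Sum.inr (Sum.inl w)) := by
  simp only [vcGadget, SimpleGraph.fromRel_adj]
  rintro ⟨hne, (⟨u, h1, h2⟩ | ⟨u, e', c', h1, h2, h3⟩) | (⟨u, h1, h2⟩ | ⟨u, e', c', h1, h2, h3⟩)⟩ <;>
    simp_all

lemma gadget_adj_pend_mid (v : V) (e : G.edgeSet) (c : Bool) :
    ¬ (vcGadget G).Adj (Sum.inr (Sum.inl v)) (Sum.inr (Sum.inr (e, c))) := by
  simp only [vcGadget, SimpleGraph.fromRel_adj]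
  rintro ⟨hne, (⟨u, h1, h2⟩ | ⟨u, e', c', h1, h2, h3⟩) | (⟨u, h1, h2⟩ | ⟨u, e', c', h1, h2, h3⟩)⟩ <;>
    simp_all

lemma gadget_adj_mid_mid (e e' : G.edgeSet) (c c' : Bool) :
    ¬ (vcGadget G).Adj (Sum.inr (Sum.inr (e, c))) (Sum.inr (Sum.inr (e', c'))) := by
  simp only [vcGadget, SimpleGraph.fromRel_adj]
  rintro ⟨hne, (⟨u, h1, h2⟩ | ⟨u, f, d, h1, h2, h3⟩) | (⟨u, h1, h2⟩ | ⟨u, f, d, h1, h2, h3⟩)⟩ <;>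
    simp_all

lemma gadget_adj_pend_inl (v w : V) :
    (vcGadget G).Adj (Sum.inr (Sum.inl w)) (Sum.inl v) ↔ v = w := by
  rw [SimpleGraph.adj_comm]; exact gadget_adj_inl_pend v w

lemma gadget_adj_mid_inl (v : V) (e : G.edgeSet) (c : Bool) :
    (vcGadget G).Adj (Sum.inr (Sum.inr (e, c))) (Sum.inl v) ↔ v ∈ (e : Sym2 V) := by
  rw [SimpleGraph.adj_comm]; exact gadget_adj_inl_mid v e c

lemma gadget_adj_mid_pend (v : V) (e : G.edgeSet) (c : Bool) :
    ¬ (vcGadget G).Adj (Sum.inr (Sum.inr (e, c))) (Sum.inr (Sum.inl v)) := by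
  rw [SimpleGraph.adj_comm]; exact gadget_adj_pend_mid v e c

lemma gadget_adj_cases {x y : V ⊕ (V ⊕ (G.edgeSet × Bool))} (h : (vcGadget G).Adj x y) :
    (∃ v, (x = Sum.inl v ∧ y = Sum.inr (Sum.inl v)) ∨ (y = Sum.inl v ∧ x = Sum.inr (Sum.inl v))) ∨
    (∃ (v : V) (e : G.edgeSet) (c : Bool), ((x = Sum.inl v ∧ y = Sum.inr (Sum.inr (e, c))) ∨
      (y = Sum.inl v ∧ x = Sum.inr (Sum.inr (e, c)))) ∧ v ∈ (e : Sym2 V)) := by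
  simp only [vcGadget, SimpleGraph.fromRel_adj] at h
  obtain ⟨hne, h | h⟩ := h
  · rcases h with ⟨v, h1, h2⟩ | ⟨v, e, c, h1, h2, h3⟩
    · exact Or.inl ⟨v, Or.inl ⟨h1, h2⟩⟩
    · exact Or.inr ⟨v, e, c, Or.inl ⟨h1, h2⟩, h3⟩
  · rcases h with ⟨v, h1, h2⟩ | ⟨v, e, c, h1, h2, h3⟩
    · exact Or.inl ⟨v, Or.inr ⟨h1, h2⟩⟩
    · exact Or.inr ⟨v, e, c, Or.inr ⟨h1, h2⟩, h3⟩

lemma endpoint_unique (S : Finset V) (hScover : ∀ a b : V, G.Adj a b → a ∈ S ∨ b ∈ S)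
    (e : G.edgeSet) {u v : V} (hu : u ∈ (e : Sym2 V)) (hv : v ∈ (e : Sym2 V))
    (hu' : u ∉ S) (hv' : v ∉ S) : u = v := by
  by_contra hne
  have he : (e : Sym2 V) = s(u, v) := (Sym2.mem_and_mem_iff hne).mp ⟨hu, hv⟩
  have hadj : G.Adj u v := by
    have h2 := e.2
    rw [he] at h2
    exact h2
  rcases hScover u v hadj with h | h
  · exact hu' h
  · exact hv' h

end Gadget

/-- center map for the star forest left after deleting the cover -/
noncomputable def starC {V : Type} (G : SimpleGraph V)
    (T : Set (V ⊕ (V ⊕ (G.edgeSet × Bool)))) : ↥Tᶜ → ↥Tᶜ := fun x =>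
  match x with
  | ⟨Sum.inl v, h⟩ => ⟨Sum.inl v, h⟩
  | ⟨Sum.inr (Sum.inl v), h⟩ =>
      if hv : (Sum.inl v : V ⊕ (V ⊕ (G.edgeSet × Bool))) ∈ Tᶜ then ⟨Sum.inl v, hv⟩
      else ⟨Sum.inr (Sum.inl v), h⟩
  | ⟨Sum.inr (Sum.inr (e, c0)), h⟩ =>
      if hv : ∃ u, u ∈ (e : Sym2 V) ∧ (Sum.inl u : V ⊕ (V ⊕ (G.edgeSet × Bool))) ∈ Tᶜ then
        ⟨Sum.inl hv.choose, hv.choose_spec.2⟩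
      else ⟨Sum.inr (Sum.inr (e, c0)), h⟩

lemma starC_inl {V : Type} (G : SimpleGraph V) (T : Set (V ⊕ (V ⊕ (G.edgeSet × Bool))))
    (v : V) (h : (Sum.inl v : V ⊕ (V ⊕ (G.edgeSet × Bool))) ∈ Tᶜ) :
    starC G T ⟨Sum.inl v, h⟩ = ⟨Sum.inl v, h⟩ := rfl

lemma starC_pend {V : Type} (G : SimpleGraph V) (T : Set (V ⊕ (V ⊕ (G.edgeSet × Bool))))
    (v : V) (h : (Sum.inr (Sum.inl v) : V ⊕ (V ⊕ (G.edgeSet × Bool))) ∈ Tᶜ) :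
    starC G T ⟨Sum.inr (Sum.inl v), h⟩ =
      if hv : (Sum.inl v : V ⊕ (V ⊕ (G.edgeSet × Bool))) ∈ Tᶜ then ⟨Sum.inl v, hv⟩
      else ⟨Sum.inr (Sum.inl v), h⟩ := rfl

lemma starC_mid {V : Type} (G : SimpleGraph V) (T : Set (V ⊕ (V ⊕ (G.edgeSet × Bool))))
    (e : G.edgeSet) (c0 : Bool)
    (h : (Sum.inr (Sum.inr (e, c0)) : V ⊕ (V ⊕ (G.edgeSet × Bool))) ∈ Tᶜ) :
    starC G T ⟨Sum.inr (Sum.inr (e, c0)), h⟩ =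
      if hv : ∃ u, u ∈ (e : Sym2 V) ∧ (Sum.inl u : V ⊕ (V ⊕ (G.edgeSet × Bool))) ∈ Tᶜ then
        ⟨Sum.inl hv.choose, hv.choose_spec.2⟩
      else ⟨Sum.inr (Sum.inr (e, c0)), h⟩ := rfl

/-- the vertex charged by each gadget vertex -/
noncomputable def charge {V : Type} (G : SimpleGraph V) :
    (V ⊕ (V ⊕ (G.edgeSet × Bool))) → V
  | Sum.inl v => v
  | Sum.inr (Sum.inl v) => v
  | Sum.inr (Sum.inr (e, _)) => (e : Sym2 V).out.1


noncomputable def sixV {V : Type} (G : SimpleGraph V) (a b : V) (e : G.edgeSet) :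
    Fin 6 → (V ⊕ (V ⊕ (G.edgeSet × Bool)))
  | 0 => Sum.inl a
  | 1 => Sum.inl b
  | 2 => Sum.inr (Sum.inl a)
  | 3 => Sum.inr (Sum.inl b)
  | 4 => Sum.inr (Sum.inr (e, false))
  | 5 => Sum.inr (Sum.inr (e, true))

set_option maxHeartbeats 1000000 in
theorem stmt12' {V : Type} [Fintype V] (G : SimpleGraph V) (k : ℕ) :
    (∃ S : Finset V, S.card ≤ k ∧ ∀ a b : V, G.Adj a b → a ∈ S ∨ b ∈ S) ↔
    (∃ S : Set (V ⊕ (V ⊕ (G.edgeSet × Bool))), S.ncard ≤ k ∧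
      LinRankwidthLE ((vcGadget G).induce Sᶜ) 1) := by
  constructor
  · rintro ⟨S, hScard, hScover⟩
    refine ⟨Sum.inl '' (↑S : Set V), ?_, ?_⟩
    · rw [Set.ncard_image_of_injective _ Sum.inl_injective, Set.ncard_coe_finset]
      exact hScard
    · apply lrw_le_one_of_star _ (starC G (Sum.inl '' (↑S : Set V)))
      intro a b hadj
      have hmemT : ∀ u : V,
          ((Sum.inl u : V ⊕ (V ⊕ (G.edgeSet × Bool))) ∈ (Sum.inl '' (↑S : Set V))ᶜ) ↔ u ∉ S := by
        intro u; simp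
      have hadj' : (vcGadget G).Adj a.1 b.1 := hadj
      rcases gadget_adj_cases hadj' with ⟨v, ⟨h1, h2⟩ | ⟨h1, h2⟩⟩ |
        ⟨v, e, c0, ⟨h1, h2⟩ | ⟨h1, h2⟩, hve⟩
      · -- a = inl v, b = pendant v
        obtain ⟨a1, ha⟩ := a; obtain ⟨b1, hb⟩ := b
        simp only at h1 h2
        subst h1; subst h2
        rw [starC_inl, starC_pend, dif_pos ha]
        exact ⟨rfl, Or.inl rfl⟩
      · -- b = inl v, a = pendant v
        obtain ⟨a1, ha⟩ := a; obtain ⟨b1, hb⟩ := b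
        simp only at h1 h2
        subst h1; subst h2
        rw [starC_inl, starC_pend, dif_pos hb]
        exact ⟨rfl, Or.inr rfl⟩
      · -- a = inl v, b = mid (e, c0)
        obtain ⟨a1, ha⟩ := a; obtain ⟨b1, hb⟩ := b
        simp only at h1 h2
        subst h1; subst h2
        have hex : ∃ u, u ∈ (e : Sym2 V) ∧
            (Sum.inl u : V ⊕ (V ⊕ (G.edgeSet × Bool))) ∈ (Sum.inl '' (↑S : Set V))ᶜ :=
          ⟨v, hve, ha⟩
        rw [starC_inl, starC_mid, dif_pos hex]
        have hspec := hex.choose_spec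
        have huv : hex.choose = v :=
          endpoint_unique S hScover e hspec.1 hve ((hmemT _).mp hspec.2) ((hmemT _).mp ha)
        constructor
        · exact Subtype.ext (congrArg Sum.inl huv.symm)
        · left; rfl
      · -- b = inl v, a = mid (e, c0)
        obtain ⟨a1, ha⟩ := a; obtain ⟨b1, hb⟩ := b
        simp only at h1 h2
        subst h1; subst h2
        have hex : ∃ u, u ∈ (e : Sym2 V) ∧
            (Sum.inl u : V ⊕ (V ⊕ (G.edgeSet × Bool))) ∈ (Sum.inl '' (↑S : Set V))ᶜ :=
          ⟨v, hve, hb⟩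
        rw [starC_inl, starC_mid, dif_pos hex]
        have hspec := hex.choose_spec
        have huv : hex.choose = v :=
          endpoint_unique S hScover e hspec.1 hve ((hmemT _).mp hspec.2) ((hmemT _).mp hb)
        constructor
        · exact Subtype.ext (congrArg Sum.inl huv)
        · right; exact Subtype.ext (congrArg Sum.inl huv)
  · rintro ⟨S, hScard, hlrw⟩
    have hSfin : S.Finite := Set.toFinite S
    refine ⟨Finset.image (charge G) hSfin.toFinset, ?_, ?_⟩
    · calc (Finset.image (charge G) hSfin.toFinset).card ≤ hSfin.toFinset.card :=
            Finset.card_image_le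
        _ = S.ncard := (Set.ncard_eq_toFinset_card _ hSfin).symm
        _ ≤ k := hScard
    · intro a b hab
      by_contra hcon
      push_neg at hcon
      obtain ⟨hna, hnb⟩ := hcon
      have himg : ∀ t, t ∈ S → charge G t ∈ Finset.image (charge G) hSfin.toFinset :=
        fun t ht => Finset.mem_image_of_mem _ (hSfin.mem_toFinset.mpr ht)
      have he : s(a, b) ∈ G.edgeSet := G.mem_edgeSet.mpr hab
      set e : G.edgeSet := ⟨s(a, b), he⟩ with hedef
      have houtmem : (e : Sym2 V).out.1 ∈ (e : Sym2 V) := Sym2.out_fst_mem _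
      have hout : (e : Sym2 V).out.1 = a ∨ (e : Sym2 V).out.1 = b := by
        rw [hedef] at houtmem
        exact Sym2.mem_iff.mp houtmem
      have hsixnot : ∀ i : Fin 6, sixV G a b e i ∉ S := by
        intro i hin
        have h1 := himg _ hin
        fin_cases i
        · exact hna h1
        · exact hnb h1
        · exact hna h1
        · exact hnb h1
        · have h1' : (e : Sym2 V).out.1 ∈ Finset.image (charge G) hSfin.toFinset := h1
          rcases hout with h | h <;> rw [h] at h1'
          · exact hna h1'
          · exact hnb h1'
        · have h1' : (e : Sym2 V).out.1 ∈ Finset.image (charge G) hSfin.toFinset := h1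
          rcases hout with h | h <;> rw [h] at h1'
          · exact hna h1'
          · exact hnb h1'
      have hf : Function.Injective (fun i : Fin 6 => (⟨sixV G a b e i, hsixnot i⟩ : ↥Sᶜ)) := by
        intro i j hij
        have hij' : sixV G a b e i = sixV G a b e j := congrArg Subtype.val hij
        have hne := hab.ne
        fin_cases i <;> fin_cases j <;> simp_all [sixV]
      have hadjc : ∀ i j : Fin 6, H6.Adj i j ↔
          ((vcGadget G).induce Sᶜ).Adj ⟨sixV G a b e i, hsixnot i⟩ ⟨sixV G a b e j, hsixnot j⟩ := by
        intro i j
        have hred : ((vcGadget G).induce Sᶜ).Adj ⟨sixV G a b e i, hsixnot i⟩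
            ⟨sixV G a b e j, hsixnot j⟩ ↔
            (vcGadget G).Adj (sixV G a b e i) (sixV G a b e j) := Iff.rfl
        rw [hred]
        have hne := hab.ne
        have hne' := hab.ne'
        have hma : a ∈ (e : Sym2 V) := by rw [hedef]; exact Sym2.mem_mk_left a b
        have hmb : b ∈ (e : Sym2 V) := by rw [hedef]; exact Sym2.mem_mk_right a b
        fin_cases i <;> fin_cases j <;>
          simp [sixV, gadget_adj_inl_inl, gadget_adj_inl_pend, gadget_adj_inl_mid,
            gadget_adj_pend_pend, gadget_adj_pend_mid, gadget_adj_mid_mid,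
            gadget_adj_pend_inl, gadget_adj_mid_inl, gadget_adj_mid_pend,
            hne, hne', hma, hmb] <;> decide
      exact not_lrw_H6 (lrw_comap H6 ((vcGadget G).induce Sᶜ)
        (fun i : Fin 6 => (⟨sixV G a b e i, hsixnot i⟩ : ↥Sᶜ)) hf hadjc 1 hlrw)

/-- `G` has a vertex cover of size at most `k` iff `G'` has a set of at most
`k` vertices whose deletion leaves a graph of linear rankwidth at most 1. -/
theorem stmt12 {V : Type} [Fintype V] (G : SimpleGraph V) (k : ℕ) :
    (∃ S : Finset V, S.card ≤ k ∧ ∀ a b : V, G.Adj a b → a ∈ S ∨ b ∈ S) ↔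
    (∃ S : Set (V ⊕ (V ⊕ (G.edgeSet × Bool))), S.ncard ≤ k ∧
      LinRankwidthLE ((vcGadget G).induce Sᶜ) 1) :=
  stmt12' G k

end LRW1
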